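/- arXiv:2211.10890 — 3 statements merged into one kernel-verified Lean document; each statement's English description precedes it below -/
import Mathlib

section
/- Let node v_i have neighborhood N(i) with |N(i)| = D_{ii}, neighbor features that are random vectors satisfying ‖∑_{j∈N(i)} x_j‖₂ ≤ R√(D_{ii}) almost surely, and let σ be homogeneous of degree τ ≥ 1 with |σ(q)| ≤ c|q| for some c ≥ 0. Then for every δ ∈ (0,1), with probability at least 1 − δ, ‖𝔼[Z_i] − Z_i‖_∞ ≤ c·R·(max_{k∈[K]} ‖w_k‖₂)·√(2 ln(2K/δ) / D_{ii}^{2τ−1}). -/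
open MeasureTheory
open scoped RealInnerProductSpace

/-! Each coordinate `Z_k` is almost surely bounded by `B = c R W √D / D^τ`, where
`W = max_k ‖w_k‖`: homogeneity pulls the factor `D^{-τ}` out of `σ`, and Cauchy–Schwarz bounds
the aggregate `⟪∑ xⱼ, w_k⟫`. By Hoeffding's lemma `Z_k - 𝔼 Z_k` is then sub-Gaussian with
variance proxy `B²`, so the Chernoff bound on both tails gives
`P(|Z_k - 𝔼 Z_k| > B √(2L)) ≤ 2 e^{-L}`. With `L = log (2K/δ)` this is `δ/K`, and a union bound
over the `K` coordinates finishes the proof. -/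

open ProbabilityTheory Real
open scoped NNReal

namespace ProbabilityTheory

variable {Ω : Type*} [MeasurableSpace Ω] {μ : Measure Ω} {X : Ω → ℝ}

lemma HasSubgaussianMGF.measureReal_lt_abs_le [IsFiniteMeasure μ] {c : ℝ≥0}
    (h : HasSubgaussianMGF X c μ) {L : ℝ} (hL : 0 ≤ L) :
    μ.real {ω | √(2 * c * L) < |X ω|} ≤ 2 * exp (-L) := by
  rcases eq_or_ne c 0 with rfl | hc
  · have hnull : μ.real {ω | √(2 * (0 : ℝ≥0) * L) < |X ω|} = 0 := by
      rw [measureReal_eq_zero_iff, measure_eq_zero_iff_ae_notMem]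
      filter_upwards [h.ae_eq_zero_of_hasSubgaussianMGF_zero] with ω hω
      simp [hω]
    rw [hnull]; positivity
  have hc' : (0 : ℝ) < c := by positivity
  set ε := √(2 * c * L)
  have hε : ε ^ 2 / (2 * c) = L := by
    rw [sq_sqrt (by positivity)]; field_simp
  calc μ.real {ω | ε < |X ω|} ≤ μ.real ({ω | ε ≤ X ω} ∪ {ω | ε ≤ (-X) ω}) := by
        refine measureReal_mono fun ω (hω : ε < |X ω|) => ?_
        rcases le_abs'.1 hω.le with h' | h'
        · exact Or.inr (show ε ≤ -X ω by linarith)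
        · exact Or.inl h'
    _ ≤ μ.real {ω | ε ≤ X ω} + μ.real {ω | ε ≤ (-X) ω} := measureReal_union_le _ _
    _ ≤ exp (-ε ^ 2 / (2 * c)) + exp (-ε ^ 2 / (2 * c)) :=
        add_le_add (h.measure_ge_le (sqrt_nonneg _)) (h.neg.measure_ge_le (sqrt_nonneg _))
    _ = 2 * exp (-L) := by rw [neg_div, hε]; ring

lemma measureReal_lt_abs_sub_integral_le [IsProbabilityMeasure μ] {B L : ℝ}
    (hm : AEMeasurable X μ) (hb : ∀ᵐ ω ∂μ, |X ω| ≤ B) (hB : 0 ≤ B) (hL : 0 ≤ L) :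
    μ.real {ω | B * √(2 * L) < |X ω - μ[X]|} ≤ 2 * exp (-L) := by
  have h := hasSubgaussianMGF_of_mem_Icc hm (hb.mono fun ω hω => abs_le.1 hω)
  have hc : (((‖B - -B‖₊ / 2) ^ 2 : ℝ≥0) : ℝ) = B ^ 2 := by
    rw [NNReal.coe_pow, NNReal.coe_div, coe_nnnorm, norm_eq_abs, sub_neg_eq_add,
      abs_of_nonneg (by linarith)]
    norm_num
  convert h.measureReal_lt_abs_le hL using 5
  rw [hc, show 2 * B ^ 2 * L = B ^ 2 * (2 * L) by ring, sqrt_mul (sq_nonneg B), sqrt_sq hB]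

end ProbabilityTheory

lemma abs_homogeneous_comp_sum_inner_le {ι E : Type*} [Fintype ι]
    [NormedAddCommGroup E] [InnerProductSpace ℝ E] {σ : ℝ → ℝ} {τ c : ℝ}
    (hhom : ∀ a q : ℝ, 0 < a → σ (a * q) = a ^ τ * σ q) (hc : 0 ≤ c)
    (hσc : ∀ q, |σ q| ≤ c * |q|) (x : ι → E) (w : E) {D : ℝ} (hD : 0 < D) :
    |σ ((1 / D) * ∑ j, ⟪x j, w⟫)| ≤ c * ‖∑ j, x j‖ * ‖w‖ / D ^ τ := by
  rw [hhom _ _ (one_div_pos.2 hD), abs_mul, div_rpow zero_le_one hD.le, one_rpow,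
    abs_of_nonneg (by positivity), ← sum_inner, one_div_mul_eq_div, mul_assoc]
  gcongr
  exact (hσc _).trans (mul_le_mul_of_nonneg_left (abs_real_inner_le_norm _ _) hc)

lemma sqrt_div_rpow_two_mul_sub_one {D : ℝ} (hD : 0 < D) (a τ : ℝ) :
    √(a / D ^ (2 * τ - 1)) = √D / D ^ τ * √a := by
  rw [rpow_sub hD, rpow_one, mul_comm, rpow_mul hD.le, rpow_two, div_div_eq_mul_div,
    sqrt_div' _ (by positivity), sqrt_sq (by positivity), sqrt_mul' _ hD.le]
  ring

lemma MeasureTheory.ofReal_one_sub_le_of_measureReal_compl_le {α : Type*} [MeasurableSpace α]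
    {μ : Measure α} [IsProbabilityMeasure μ] {s : Set α} {δ : ℝ} (h : μ.real sᶜ ≤ δ) :
    ENNReal.ofReal (1 - δ) ≤ μ s := by
  have h1 : 1 ≤ μ.real s + μ.real sᶜ := by
    simpa using measureReal_union_le (μ := μ) s sᶜ
  exact ENNReal.ofReal_le_of_le_toReal (by rw [← measureReal_def]; linarith)

theorem stmt2_general
    {Ω : Type*} [MeasurableSpace Ω] (P : Measure Ω) [IsProbabilityMeasure P]
    (F K D : ℕ) (hK : 0 < K) (hD : 0 < D) (R : ℝ) (hR : 0 ≤ R)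
    (x : Fin D → Ω → EuclideanSpace ℝ (Fin F))
    (hxm : ∀ j, Measurable (x j))
    (hx : ∀ᵐ ω ∂P, ‖∑ j, x j ω‖ ≤ R * Real.sqrt D)
    (σ : ℝ → ℝ) (hσm : Measurable σ) (τ : ℝ)
    (hhom : ∀ a q : ℝ, 0 < a → σ (a * q) = a ^ τ * σ q)
    (c : ℝ) (hc : 0 ≤ c) (hσc : ∀ q, |σ q| ≤ c * |q|)
    (w : Fin K → EuclideanSpace ℝ (Fin F))
    (Z : Ω → Fin K → ℝ)
    (hZ : ∀ ω k, Z ω k = σ ((1 / (D : ℝ)) * ∑ j, ⟪x j ω, w k⟫))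
    (δ : ℝ) (hδ : δ ∈ Set.Ioo (0 : ℝ) 1) :
    ENNReal.ofReal (1 - δ) ≤
      P {ω | ∀ k : Fin K, |(∫ ω', Z ω' k ∂P) - Z ω k| ≤
        c * R * (⨆ k' : Fin K, ‖w k'‖) *
          Real.sqrt (2 * Real.log (2 * K / δ) / (D : ℝ) ^ (2 * τ - 1))} := by
  obtain ⟨hδ0, hδ1⟩ := hδ
  have hD' : (0 : ℝ) < D := Nat.cast_pos.2 hD
  have hK' : (0 : ℝ) < K := Nat.cast_pos.2 hK
  set W := ⨆ k' : Fin K, ‖w k'‖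
  have hWk (k : Fin K) : ‖w k‖ ≤ W :=
    le_ciSup (f := fun k' => ‖w k'‖) (Set.finite_range _).bddAbove k
  have hW : 0 ≤ W := Real.iSup_nonneg fun k => norm_nonneg (w k)
  set L := log (2 * K / δ)
  have hL : 0 ≤ L := log_nonneg <| by
    rw [le_div_iff₀ hδ0]; linarith [(Nat.one_le_cast.2 hK : (1 : ℝ) ≤ K)]
  set B := c * (R * √D) * W / D ^ τ with hB_def
  have hB : 0 ≤ B := by positivity
  have hZ_le (k : Fin K) : ∀ᵐ ω ∂P, |Z ω k| ≤ B := by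
    filter_upwards [hx] with ω hω
    rw [hZ]
    refine (abs_homogeneous_comp_sum_inner_le hhom hc hσc _ _ hD').trans ?_
    rw [hB_def]
    gcongr
    exact hWk k
  have hthreshold : c * R * W * √(2 * L / D ^ (2 * τ - 1)) = B * √(2 * L) := by
    rw [sqrt_div_rpow_two_mul_sub_one hD']; ring
  have htail (k : Fin K) :
      P.real {ω | B * √(2 * L) < |(∫ ω', Z ω' k ∂P) - Z ω k|} ≤ δ / K := by
    have hZm : Measurable fun ω => Z ω k := by
      simp only [hZ]
      fun_prop
    simp_rw [abs_sub_comm (∫ ω', Z ω' k ∂P)]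
    refine (measureReal_lt_abs_sub_integral_le hZm.aemeasurable (hZ_le k) hB hL).trans_eq ?_
    rw [exp_neg, exp_log (by positivity)]
    field_simp
  rw [hthreshold]
  refine ofReal_one_sub_le_of_measureReal_compl_le ?_
  calc _ = P.real (⋃ k : Fin K, {ω | B * √(2 * L) < |(∫ ω', Z ω' k ∂P) - Z ω k|}) := by
        congr 1; ext ω; simp
    _ ≤ ∑ k : Fin K, δ / K :=
        (measureReal_iUnion_fintype_le _).trans (Finset.sum_le_sum fun k _ => htail k)
    _ = δ := by
      rw [Finset.sum_const, Finset.card_univ, Fintype.card_fin, nsmul_eq_mul]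
      field_simp

/-- Concentration of the aggregated representation around its mean (Theorem 1, part 2):
if the neighbor features satisfy `‖∑_{j∈N(i)} xⱼ‖₂ ≤ R √Dᵢᵢ` almost surely, and `σ` is
homogeneous of degree `τ ≥ 1` with `|σ q| ≤ c |q|`, then for every `δ ∈ (0,1)`, with
probability at least `1 - δ`,
`‖𝔼[Zᵢ] - Zᵢ‖_∞ ≤ c R (max_k ‖w_k‖₂) √(2 ln(2K/δ) / Dᵢᵢ^{2τ-1})`. -/
theorem stmt2
    {Ω : Type*} [MeasurableSpace Ω] (P : Measure Ω) [IsProbabilityMeasure P]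
    (F K D : ℕ) (hK : 0 < K) (hD : 0 < D) (R : ℝ) (hR : 0 ≤ R)
    (x : Fin D → Ω → EuclideanSpace ℝ (Fin F))
    (hxm : ∀ j, Measurable (x j))
    (hx : ∀ᵐ ω ∂P, ‖∑ j, x j ω‖ ≤ R * Real.sqrt D)
    (σ : ℝ → ℝ) (hσm : Measurable σ) (τ : ℝ) (hτ : 1 ≤ τ)
    (hhom : ∀ a q : ℝ, 0 < a → σ (a * q) = a ^ τ * σ q)
    (c : ℝ) (hc : 0 ≤ c) (hσc : ∀ q, |σ q| ≤ c * |q|)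
    (w : Fin K → EuclideanSpace ℝ (Fin F))
    (Z : Ω → Fin K → ℝ)
    (hZ : ∀ ω k, Z ω k = σ ((1 / (D : ℝ)) * ∑ j, ⟪x j ω, w k⟫))
    (δ : ℝ) (hδ : δ ∈ Set.Ioo (0 : ℝ) 1) :
    ENNReal.ofReal (1 - δ) ≤
      P {ω | ∀ k : Fin K, |(∫ ω', Z ω' k ∂P) - Z ω k| ≤
        c * R * (⨆ k' : Fin K, ‖w k'‖) *
          Real.sqrt (2 * Real.log (2 * K / δ) / (D : ℝ) ^ (2 * τ - 1))} :=
  stmt2_general P F K D hK hD R hR x hxm hx σ hσm τ hhom c hc hσc w Z hZ δ hδ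
end

section
/- Let nodes v_i and v_j have neighborhoods N(i), N(j) with sizes D_{ii}, D_{jj}, and suppose ‖∑_{j'∈N(i)} x_{j'}‖₂ ≤ R√(D_{ii}) and ‖∑_{j'∈N(j)} x_{j'}‖₂ ≤ R√(D_{jj}) almost surely. If σ is homogeneous of degree τ ≥ 1 and |σ(q)| ≤ c|q| for some c ≥ 0, then the inner product of aggregated representations satisfies |Z_iᵀ Z_j| ≤ c²·R²·(∑_{k=1}^K ‖w_k‖₂²)·(D_{ii} D_{jj})^{1/2 − τ} almost surely. -/
open MeasureTheory
open scoped RealInnerProductSpace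

/-- If the neighbor features of nodes `vᵢ` and `vⱼ` satisfy
`‖∑_{j'∈N(i)} x_{j'}‖₂ ≤ R √Dᵢᵢ` and `‖∑_{j'∈N(j)} x_{j'}‖₂ ≤ R √Dⱼⱼ` almost surely,
and `σ` is homogeneous of degree `τ ≥ 1` with `|σ q| ≤ c |q|`, then the inner product
of the aggregated representations satisfies
`|Zᵢᵀ Zⱼ| ≤ c² R² (∑_k ‖w_k‖₂²) (Dᵢᵢ Dⱼⱼ)^{1/2 - τ}` almost surely. -/
theorem stmt3
    {Ω : Type*} [MeasurableSpace Ω] (P : Measure Ω) [IsProbabilityMeasure P]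
    (F K Di Dj : ℕ) (hDi : 0 < Di) (hDj : 0 < Dj) (R : ℝ) (hR : 0 ≤ R)
    (xi : Fin Di → Ω → EuclideanSpace ℝ (Fin F))
    (xj : Fin Dj → Ω → EuclideanSpace ℝ (Fin F))
    (hxi : ∀ᵐ ω ∂P, ‖∑ j', xi j' ω‖ ≤ R * Real.sqrt Di)
    (hxj : ∀ᵐ ω ∂P, ‖∑ j', xj j' ω‖ ≤ R * Real.sqrt Dj)
    (σ : ℝ → ℝ) (τ : ℝ) (hτ : 1 ≤ τ)
    (hhom : ∀ a q : ℝ, 0 < a → σ (a * q) = a ^ τ * σ q)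
    (c : ℝ) (hc : 0 ≤ c) (hσc : ∀ q, |σ q| ≤ c * |q|)
    (w : Fin K → EuclideanSpace ℝ (Fin F))
    (Zi Zj : Ω → Fin K → ℝ)
    (hZi : ∀ ω k, Zi ω k = σ ((1 / (Di : ℝ)) * ∑ j', ⟪xi j' ω, w k⟫))
    (hZj : ∀ ω k, Zj ω k = σ ((1 / (Dj : ℝ)) * ∑ j', ⟪xj j' ω, w k⟫)) :
    ∀ᵐ ω ∂P,
      |∑ k, Zi ω k * Zj ω k| ≤
        c ^ 2 * R ^ 2 * (∑ k, ‖w k‖ ^ 2) * ((Di : ℝ) * (Dj : ℝ)) ^ ((1 : ℝ) / 2 - τ) := by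
  have hDi' : (0:ℝ) < Di := Nat.cast_pos.mpr hDi
  have hDj' : (0:ℝ) < Dj := Nat.cast_pos.mpr hDj
  filter_upwards [hxi, hxj] with ω hi hj
  -- key bound for one node
  have key : ∀ (D : ℕ) (hD : (0:ℝ) < D) (S : EuclideanSpace ℝ (Fin F))
      (hS : ‖S‖ ≤ R * Real.sqrt D) (k : Fin K),
      |σ ((1 / (D:ℝ)) * ⟪S, w k⟫)| ≤ c * R * (D:ℝ) ^ ((1:ℝ)/2 - τ) * ‖w k‖ := by
    intro D hD S hS k
    rw [hhom _ _ (by positivity), abs_mul]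
    have h1 : |(1/(D:ℝ)) ^ τ| = (D:ℝ) ^ (-τ) := by
      rw [abs_of_nonneg (Real.rpow_nonneg (by positivity) _), one_div,
        Real.inv_rpow hD.le, ← Real.rpow_neg hD.le]
    rw [h1]
    calc (D:ℝ) ^ (-τ) * |σ ⟪S, w k⟫|
        ≤ (D:ℝ) ^ (-τ) * (c * (‖S‖ * ‖w k‖)) := by
          gcongr
          exact (hσc _).trans (by gcongr; exact abs_real_inner_le_norm _ _)
      _ ≤ (D:ℝ) ^ (-τ) * (c * ((R * Real.sqrt D) * ‖w k‖)) := by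
          gcongr
      _ = c * R * ((D:ℝ) ^ (-τ) * Real.sqrt D) * ‖w k‖ := by ring
      _ = c * R * (D:ℝ) ^ ((1:ℝ)/2 - τ) * ‖w k‖ := by
          rw [Real.sqrt_eq_rpow, ← Real.rpow_add hD]
          ring_nf
  have hik : ∀ k, |Zi ω k| ≤ c * R * (Di:ℝ) ^ ((1:ℝ)/2 - τ) * ‖w k‖ := by
    intro k
    rw [hZi, ← sum_inner]
    exact key Di hDi' _ hi k
  have hjk : ∀ k, |Zj ω k| ≤ c * R * (Dj:ℝ) ^ ((1:ℝ)/2 - τ) * ‖w k‖ := by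
    intro k
    rw [hZj, ← sum_inner]
    exact key Dj hDj' _ hj k
  calc |∑ k, Zi ω k * Zj ω k| ≤ ∑ k, |Zi ω k * Zj ω k| := Finset.abs_sum_le_sum_abs _ _
    _ ≤ ∑ k, (c * R * (Di:ℝ) ^ ((1:ℝ)/2 - τ) * ‖w k‖) *
          (c * R * (Dj:ℝ) ^ ((1:ℝ)/2 - τ) * ‖w k‖) := by
        refine Finset.sum_le_sum fun k _ => ?_
        rw [abs_mul]
        exact mul_le_mul (hik k) (hjk k) (abs_nonneg _) (by positivity)
    _ = c ^ 2 * R ^ 2 * (∑ k, ‖w k‖ ^ 2) *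
          ((Di:ℝ) ^ ((1:ℝ)/2 - τ) * (Dj:ℝ) ^ ((1:ℝ)/2 - τ)) := by
        rw [Finset.mul_sum, Finset.sum_mul]
        exact Finset.sum_congr rfl fun k _ => by ring
    _ = c ^ 2 * R ^ 2 * (∑ k, ‖w k‖ ^ 2) * ((Di : ℝ) * (Dj : ℝ)) ^ ((1:ℝ)/2 - τ) := by
        rw [← Real.mul_rpow hDi'.le hDj'.le]
end

section
/- Let nodes v_i and v_j have neighborhoods of sizes D_{ii}, D_{jj}, random neighbor features with ‖∑_{j'∈N(i)} x_{j'}‖₂ ≤ R√(D_{ii}) and ‖∑_{j'∈N(j)} x_{j'}‖₂ ≤ R√(D_{jj}) almost surely, and let σ be homogeneous of degree τ ≥ 1 with |σ(q)| ≤ c|q| for some c ≥ 0. Then for every δ' ∈ (0,1), with probability at least 1 − δ', |𝔼[Z_iᵀ Z_j] − Z_iᵀ Z_j| ≤ c²·R²·(∑_{k=1}^K ‖w_k‖₂²)·√(2 ln(2/δ') / (D_{ii}^{2τ−1} D_{jj}^{2τ−1})). -/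
/-!
Each coordinate of `Zᵢ` is bounded by `c R Dᵢᵢ^(1/2 - τ) ‖w_k‖`: homogeneity pulls the factor
`Dᵢᵢ^(-τ)` out of `σ`, and the linear bound on `σ` with Cauchy–Schwarz bounds the rest by
`c R √Dᵢᵢ ‖w_k‖`. Hence `|Zᵢᵀ Zⱼ| ≤ B := c² R² (∑ₖ ‖w_k‖²) (Dᵢᵢ Dⱼⱼ)^(1/2 - τ)` almost surely.
By Hoeffding's lemma `Zᵢᵀ Zⱼ - 𝔼[Zᵢᵀ Zⱼ]` is sub-Gaussian with parameter `B²`, and the two-sided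
Chernoff bound at level `B √(2 log (2/δ'))` fails with probability at most `2 · (δ'/2) = δ'`.
-/

open MeasureTheory ProbabilityTheory
open scoped RealInnerProductSpace NNReal

section Concentration

variable {Ω : Type*} [MeasurableSpace Ω] {μ : Measure Ω} [IsProbabilityMeasure μ]
  {X : Ω → ℝ} {B : ℝ}

theorem measureReal_abs_sub_integral_ge_le (hX : AEMeasurable X μ)
    (hB : ∀ᵐ ω ∂μ, |X ω| ≤ B) {ε : ℝ} (hε : 0 ≤ ε) :
    μ.real {ω | ε ≤ |X ω - μ[X]|} ≤ 2 * Real.exp (-ε ^ 2 / (2 * B ^ 2)) := by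
  have hX' := hasSubgaussianMGF_of_mem_Icc hX (a := -B) (b := B)
    (by filter_upwards [hB] with ω h using abs_le.mp h)
  have hparam : (((‖B - -B‖₊ / 2) ^ 2 : ℝ≥0) : ℝ) = B ^ 2 := by simp [← two_mul]
  calc μ.real {ω | ε ≤ |X ω - μ[X]|}
      ≤ μ.real ({ω | ε ≤ X ω - μ[X]} ∪ {ω | ε ≤ -(X ω - μ[X])}) :=
        measureReal_mono fun ω (h : ε ≤ |X ω - μ[X]|) => le_abs.mp h
    _ ≤ μ.real {ω | ε ≤ X ω - μ[X]} + μ.real {ω | ε ≤ -(X ω - μ[X])} :=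
        measureReal_union_le _ _
    _ ≤ Real.exp (-ε ^ 2 / (2 * B ^ 2)) + Real.exp (-ε ^ 2 / (2 * B ^ 2)) := by
        rw [← hparam]
        exact add_le_add (hX'.measure_ge_le hε) (hX'.neg.measure_ge_le hε)
    _ = 2 * Real.exp (-ε ^ 2 / (2 * B ^ 2)) := by ring

theorem ofReal_one_sub_le_measure_abs_integral_sub_le (hX : AEMeasurable X μ)
    (hB : ∀ᵐ ω ∂μ, |X ω| ≤ B) {δ : ℝ} (hδ : δ ∈ Set.Ioo 0 1) :
    ENNReal.ofReal (1 - δ) ≤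
      μ {ω | |μ[X] - X ω| ≤ B * √(2 * Real.log (2 / δ))} := by
  set A := {ω | |μ[X] - X ω| ≤ B * √(2 * Real.log (2 / δ))}
  obtain ⟨hδ0, hδ1⟩ := hδ
  have hL : 0 < Real.log (2 / δ) := Real.log_pos (by rw [lt_div_iff₀ hδ0]; linarith)
  obtain ⟨ω₀, hω₀⟩ := hB.exists
  have hAc : μ.real Aᶜ ≤ δ := by
    -- For `B = 0` the Chernoff exponent divides by zero, so that case is done by hand.
    obtain hB0 | hBpos := (abs_nonneg _ |>.trans hω₀).eq_or_lt
    · have hX0 : X =ᵐ[μ] 0 := by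
        filter_upwards [hB] with ω h using abs_nonpos_iff.mp (hB0 ▸ h)
      have hA : μ Aᶜ = 0 := by
        filter_upwards [hX0] with ω h
        simp [A, integral_congr_ae hX0, h, ← hB0]
      simp [measureReal_def, hA, hδ0.le]
    calc μ.real Aᶜ
        ≤ μ.real {ω | B * √(2 * Real.log (2 / δ)) ≤ |X ω - μ[X]|} :=
          measureReal_mono fun ω (h : ¬|μ[X] - X ω| ≤ _) => by
            show _ ≤ |X ω - μ[X]|
            rw [abs_sub_comm]
            exact (not_le.mp h).le
      _ ≤ 2 * Real.exp (-(B * √(2 * Real.log (2 / δ))) ^ 2 / (2 * B ^ 2)) :=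
          measureReal_abs_sub_integral_ge_le hX hB (by positivity)
      _ = δ := by
          rw [mul_pow, Real.sq_sqrt (by positivity), show
            -(B ^ 2 * (2 * Real.log (2 / δ))) / (2 * B ^ 2) = -Real.log (2 / δ) by
              field_simp, Real.exp_neg, Real.exp_log (by positivity)]
          field_simp
  have hA : 1 - δ ≤ μ.real A := by
    have := measureReal_union_le (μ := μ) A Aᶜ
    rw [Set.union_compl_self, probReal_univ] at this
    linarith
  calc ENNReal.ofReal (1 - δ) ≤ ENNReal.ofReal (μ.real A) := ENNReal.ofReal_le_ofReal hA
    _ = μ A := ofReal_measureReal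

end Concentration

theorem abs_sum_mul_le_of_abs_le {ι : Type*} (s : Finset ι) {u v a : ι → ℝ} {α β : ℝ}
    (hu : ∀ i ∈ s, |u i| ≤ α * a i) (hv : ∀ i ∈ s, |v i| ≤ β * a i) :
    |∑ i ∈ s, u i * v i| ≤ α * β * ∑ i ∈ s, a i ^ 2 := by
  calc |∑ i ∈ s, u i * v i| ≤ ∑ i ∈ s, |u i * v i| := Finset.abs_sum_le_sum_abs _ _
    _ ≤ ∑ i ∈ s, α * a i * (β * a i) := Finset.sum_le_sum fun i hi => by
        rw [abs_mul]
        exact mul_le_mul (hu i hi) (hv i hi) (abs_nonneg _) ((abs_nonneg _).trans (hu i hi))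
    _ = α * β * ∑ i ∈ s, a i ^ 2 := by
        rw [Finset.mul_sum]
        exact Finset.sum_congr rfl fun i _ => by ring

theorem inv_sqrt_rpow_two_mul_sub_one {D : ℝ} (hD : 0 ≤ D) (τ : ℝ) :
    (√(D ^ (2 * τ - 1)))⁻¹ = D ^ (1 / 2 - τ) := by
  rw [Real.sqrt_eq_rpow, ← Real.rpow_mul hD, ← Real.rpow_neg hD]
  ring_nf

section Activation

variable {σ : ℝ → ℝ} {τ c : ℝ}

theorem abs_apply_mul_le_of_homogeneous (hhom : ∀ a q : ℝ, 0 < a → σ (a * q) = a ^ τ * σ q)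
    (hσc : ∀ q, |σ q| ≤ c * |q|) {a : ℝ} (ha : 0 < a) (q : ℝ) :
    |σ (a * q)| ≤ c * a ^ τ * |q| := by
  rw [hhom a q ha, abs_mul, abs_of_pos (Real.rpow_pos_of_pos ha τ)]
  calc a ^ τ * |σ q| ≤ a ^ τ * (c * |q|) := by gcongr; exact hσc q
    _ = c * a ^ τ * |q| := by ring

theorem abs_apply_inv_mul_inner_le {E : Type*} [NormedAddCommGroup E] [InnerProductSpace ℝ E]
    (hhom : ∀ a q : ℝ, 0 < a → σ (a * q) = a ^ τ * σ q) (hc : 0 ≤ c)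
    (hσc : ∀ q, |σ q| ≤ c * |q|) {D R : ℝ} (hD : 0 < D) {x : E} (hx : ‖x‖ ≤ R * √D)
    (v : E) :
    |σ (1 / D * ⟪x, v⟫)| ≤ c * R * D ^ (1 / 2 - τ) * ‖v‖ := by
  calc |σ (1 / D * ⟪x, v⟫)| ≤ c * (1 / D) ^ τ * |⟪x, v⟫| :=
        abs_apply_mul_le_of_homogeneous hhom hσc (by positivity) _
    _ ≤ c * (1 / D) ^ τ * (R * √D * ‖v‖) := by
        gcongr
        exact (abs_real_inner_le_norm x v).trans (by gcongr)
    _ = c * R * D ^ (1 / 2 - τ) * ‖v‖ := by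
        rw [Real.sqrt_eq_rpow, one_div, Real.inv_rpow hD.le, Real.rpow_sub hD]
        ring

end Activation

theorem stmt4_general
    {Ω : Type*} [MeasurableSpace Ω] (P : Measure Ω) [IsProbabilityMeasure P]
    (F K Di Dj : ℕ) (hDi : 0 < Di) (hDj : 0 < Dj) (R : ℝ)
    (xi : Fin Di → Ω → EuclideanSpace ℝ (Fin F))
    (xj : Fin Dj → Ω → EuclideanSpace ℝ (Fin F))
    (hxim : ∀ j', Measurable (xi j')) (hxjm : ∀ j', Measurable (xj j'))
    (hxi : ∀ᵐ ω ∂P, ‖∑ j', xi j' ω‖ ≤ R * Real.sqrt Di)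
    (hxj : ∀ᵐ ω ∂P, ‖∑ j', xj j' ω‖ ≤ R * Real.sqrt Dj)
    (σ : ℝ → ℝ) (hσm : Measurable σ) (τ : ℝ)
    (hhom : ∀ a q : ℝ, 0 < a → σ (a * q) = a ^ τ * σ q)
    (c : ℝ) (hc : 0 ≤ c) (hσc : ∀ q, |σ q| ≤ c * |q|)
    (w : Fin K → EuclideanSpace ℝ (Fin F))
    (Zi Zj : Ω → Fin K → ℝ)
    (hZi : ∀ ω k, Zi ω k = σ ((1 / (Di : ℝ)) * ∑ j', ⟪xi j' ω, w k⟫))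
    (hZj : ∀ ω k, Zj ω k = σ ((1 / (Dj : ℝ)) * ∑ j', ⟪xj j' ω, w k⟫))
    (δ' : ℝ) (hδ' : δ' ∈ Set.Ioo (0 : ℝ) 1) :
    ENNReal.ofReal (1 - δ') ≤
      P {ω | |(∫ ω', ∑ k, Zi ω' k * Zj ω' k ∂P) - ∑ k, Zi ω k * Zj ω k| ≤
        c ^ 2 * R ^ 2 * (∑ k, ‖w k‖ ^ 2) *
          Real.sqrt (2 * Real.log (2 / δ') /
            ((Di : ℝ) ^ (2 * τ - 1) * (Dj : ℝ) ^ (2 * τ - 1)))} := by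
  obtain rfl : Zi = _ := funext fun ω => funext (hZi ω)
  obtain rfl : Zj = _ := funext fun ω => funext (hZj ω)
  have hDi' : (0 : ℝ) < Di := Nat.cast_pos.mpr hDi
  have hDj' : (0 : ℝ) < Dj := Nat.cast_pos.mpr hDj
  have hb : ∀ᵐ ω ∂P, |∑ k, σ (1 / (Di : ℝ) * ∑ j', ⟪xi j' ω, w k⟫) *
      σ (1 / (Dj : ℝ) * ∑ j', ⟪xj j' ω, w k⟫)| ≤
      c * R * (Di : ℝ) ^ (1 / 2 - τ) * (c * R * (Dj : ℝ) ^ (1 / 2 - τ)) *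
        ∑ k, ‖w k‖ ^ 2 := by
    filter_upwards [hxi, hxj] with ω hωi hωj
    simp only [← sum_inner]
    exact abs_sum_mul_le_of_abs_le _
      (fun k _ => abs_apply_inv_mul_inner_le hhom hc hσc hDi' hωi (w k))
      (fun k _ => abs_apply_inv_mul_inner_le hhom hc hσc hDj' hωj (w k))
  have hradius : c ^ 2 * R ^ 2 * (∑ k, ‖w k‖ ^ 2) *
      √(2 * Real.log (2 / δ') / ((Di : ℝ) ^ (2 * τ - 1) * (Dj : ℝ) ^ (2 * τ - 1))) =
      c * R * (Di : ℝ) ^ (1 / 2 - τ) * (c * R * (Dj : ℝ) ^ (1 / 2 - τ)) *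
        (∑ k, ‖w k‖ ^ 2) * √(2 * Real.log (2 / δ')) := by
    rw [Real.sqrt_div' _ (by positivity), Real.sqrt_mul (Real.rpow_nonneg hDi'.le _),
      div_eq_mul_inv, mul_inv, inv_sqrt_rpow_two_mul_sub_one hDi'.le,
      inv_sqrt_rpow_two_mul_sub_one hDj'.le]
    ring
  rw [hradius]
  exact ofReal_one_sub_le_measure_abs_integral_sub_le (by fun_prop) hb hδ'

/-- Concentration of the inner product of aggregated representations (Theorem 1, part 3):
under the boundedness and homogeneity assumptions on the neighbor features and the
activation `σ`, for every `δ' ∈ (0,1)`, with probability at least `1 - δ'`,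
`|𝔼[Zᵢᵀ Zⱼ] - Zᵢᵀ Zⱼ| ≤ c² R² (∑_k ‖w_k‖₂²) √(2 ln(2/δ') / (Dᵢᵢ^{2τ-1} Dⱼⱼ^{2τ-1}))`. -/
theorem stmt4
    {Ω : Type*} [MeasurableSpace Ω] (P : Measure Ω) [IsProbabilityMeasure P]
    (F K Di Dj : ℕ) (hDi : 0 < Di) (hDj : 0 < Dj) (R : ℝ) (hR : 0 ≤ R)
    (xi : Fin Di → Ω → EuclideanSpace ℝ (Fin F))
    (xj : Fin Dj → Ω → EuclideanSpace ℝ (Fin F))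
    (hxim : ∀ j', Measurable (xi j')) (hxjm : ∀ j', Measurable (xj j'))
    (hxi : ∀ᵐ ω ∂P, ‖∑ j', xi j' ω‖ ≤ R * Real.sqrt Di)
    (hxj : ∀ᵐ ω ∂P, ‖∑ j', xj j' ω‖ ≤ R * Real.sqrt Dj)
    (σ : ℝ → ℝ) (hσm : Measurable σ) (τ : ℝ) (hτ : 1 ≤ τ)
    (hhom : ∀ a q : ℝ, 0 < a → σ (a * q) = a ^ τ * σ q)
    (c : ℝ) (hc : 0 ≤ c) (hσc : ∀ q, |σ q| ≤ c * |q|)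
    (w : Fin K → EuclideanSpace ℝ (Fin F))
    (Zi Zj : Ω → Fin K → ℝ)
    (hZi : ∀ ω k, Zi ω k = σ ((1 / (Di : ℝ)) * ∑ j', ⟪xi j' ω, w k⟫))
    (hZj : ∀ ω k, Zj ω k = σ ((1 / (Dj : ℝ)) * ∑ j', ⟪xj j' ω, w k⟫))
    (δ' : ℝ) (hδ' : δ' ∈ Set.Ioo (0 : ℝ) 1) :
    ENNReal.ofReal (1 - δ') ≤
      P {ω | |(∫ ω', ∑ k, Zi ω' k * Zj ω' k ∂P) - ∑ k, Zi ω k * Zj ω k| ≤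
        c ^ 2 * R ^ 2 * (∑ k, ‖w k‖ ^ 2) *
          Real.sqrt (2 * Real.log (2 / δ') /
            ((Di : ℝ) ^ (2 * τ - 1) * (Dj : ℝ) ^ (2 * τ - 1)))} :=
  stmt4_general P F K Di Dj hDi hDj R xi xj hxim hxjm hxi hxj σ hσm τ hhom c hc hσc w Zi Zj hZi hZj
    δ' hδ'
end
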